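/- arXiv:1304.7049 — 2 statements merged into one kernel-verified Lean document; each statement's English description precedes it below -/
import Mathlib

section
/- Let A ∈ ℂ^{m×n} be arbitrary, let A† be its Moore–Penrose pseudoinverse, let S ⊆ {1,…,m}×{1,…,n} be an arbitrary sparsity pattern, and let F(A,S) be the corresponding feasible set. Then there exists a globally unique minimizer: there is exactly one X ∈ F(A,S) such that J(X;A) ≤ J(Y;A) for all Y ∈ F(A,S). -/
open scoped Matrix

/-- `B` is the Moore–Penrose pseudoinverse of `A`. -/
def IsMPInv {m n : ℕ} (A : Matrix (Fin m) (Fin n) ℂ) (B : Matrix (Fin n) (Fin m) ℂ) : Prop :=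
  A * B * A = A ∧ B * A * B = B ∧ (A * B)ᴴ = A * B ∧ (B * A)ᴴ = B * A

/-- Squared Frobenius norm. -/
noncomputable def frobSq {m n : ℕ} (M : Matrix (Fin m) (Fin n) ℂ) : ℝ :=
  ∑ i, ∑ j, ‖M i j‖ ^ 2

/-- The misfit functional `J(X;A) = ½‖(X-A)A†‖_F² + ½‖A†(X-A)‖_F²`,
with the pseudoinverse `Ad` of `A` given explicitly. -/
noncomputable def Jmis {m n : ℕ} (X A : Matrix (Fin m) (Fin n) ℂ)
    (Ad : Matrix (Fin n) (Fin m) ℂ) : ℝ :=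
  (1 / 2) * frobSq ((X - A) * Ad) + (1 / 2) * frobSq (Ad * (X - A))

/-- The feasible set `F(A,S)`: the null space of `A` is contained in that of `X`,
the null space of `A*` in that of `X*`, and `X` vanishes outside the pattern `S`. -/
def Feasible {m n : ℕ} (A X : Matrix (Fin m) (Fin n) ℂ) (S : Set (Fin m × Fin n)) : Prop :=
  (∀ v : Fin n → ℂ, A.mulVec v = 0 → X.mulVec v = 0) ∧
  (∀ v : Fin m → ℂ, Aᴴ.mulVec v = 0 → Xᴴ.mulVec v = 0) ∧
  (∀ ij : Fin m × Fin n, ij ∉ S → X ij.1 ij.2 = 0)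

/-!
Writing `T X = (X A†, A† X)`, the misfit is `J(X;A) = ½‖T A - T X‖²` for the Euclidean norm, and
`F(A,S)` is a subspace, so the minimizers of `J` on `F(A,S)` are the preimages in `F(A,S)` of the
orthogonal projection of `T A` onto `T(F(A,S))`. There is exactly one, as `T` is injective on
`F(A,S)`: if `X ∈ F(A,S)` and `X A† = 0`, then `X = X A† A = 0`, because `I - A† A` maps into the
null space of `A`, hence of `X`.
-/

namespace Submodule

variable {𝕜 E : Type*} [RCLike 𝕜] [NormedAddCommGroup E] [InnerProductSpace 𝕜 E]
  (K : Submodule 𝕜 E) [K.HasOrthogonalProjection]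

theorem norm_sub_sq_eq_norm_sub_starProjection_sq_add (u : E) {y : E} (hy : y ∈ K) :
    ‖u - y‖ ^ 2 = ‖u - K.starProjection u‖ ^ 2 + ‖K.starProjection u - y‖ ^ 2 := by
  rw [sq, sq, sq, ← norm_add_sq_eq_norm_sq_add_norm_sq_of_inner_eq_zero _ _
    (K.starProjection_inner_eq_zero u _ (K.sub_mem (K.starProjection_apply_mem u) hy)),
    sub_add_sub_cancel]

theorem existsUnique_forall_norm_sub_le (u : E) :
    ∃! y, y ∈ K ∧ ∀ z ∈ K, ‖u - y‖ ≤ ‖u - z‖ := by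
  refine ⟨K.starProjection u, ⟨K.starProjection_apply_mem u, fun z hz => ?_⟩, ?_⟩
  · refine le_of_pow_le_pow_left₀ two_ne_zero (norm_nonneg _) ?_
    rw [K.norm_sub_sq_eq_norm_sub_starProjection_sq_add u hz]
    exact le_add_of_nonneg_right (sq_nonneg _)
  · rintro y ⟨hy, hmin⟩
    have hle := pow_le_pow_left₀ (norm_nonneg _) (hmin _ (K.starProjection_apply_mem u)) 2
    rw [K.norm_sub_sq_eq_norm_sub_starProjection_sq_add u hy] at hle
    have hdist : ‖K.starProjection u - y‖ ^ 2 = 0 := le_antisymm (by linarith) (sq_nonneg _)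
    exact (norm_sub_eq_zero_iff.1 (pow_eq_zero_iff two_ne_zero |>.1 hdist)).symm

end Submodule

theorem LinearMap.existsUnique_forall_norm_sub_le_of_injOn {𝕜 V E : Type*} [RCLike 𝕜]
    [AddCommGroup V] [Module 𝕜 V] [NormedAddCommGroup E] [InnerProductSpace 𝕜 E]
    (T : V →ₗ[𝕜] E) {F : Submodule 𝕜 V} (hT : Set.InjOn T F) [(F.map T).HasOrthogonalProjection]
    (u : E) : ∃! x, x ∈ F ∧ ∀ y ∈ F, ‖u - T x‖ ≤ ‖u - T y‖ := by
  obtain ⟨_, ⟨⟨x, hx, rfl⟩, hmin⟩, huniq⟩ := (F.map T).existsUnique_forall_norm_sub_le u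
  refine ⟨x, ⟨hx, fun y hy => hmin _ (Submodule.mem_map_of_mem hy)⟩, ?_⟩
  rintro x' ⟨hx', hmin'⟩
  refine hT hx' hx (huniq _ ⟨Submodule.mem_map_of_mem hx', ?_⟩)
  rintro _ ⟨y, hy, rfl⟩
  exact hmin' y hy

section Misfit

variable {m n : ℕ}

noncomputable def mulPinvPair (Ad : Matrix (Fin n) (Fin m) ℂ) :
    Matrix (Fin m) (Fin n) ℂ →ₗ[ℂ] EuclideanSpace ℂ ((Fin m × Fin m) ⊕ (Fin n × Fin n)) where
  toFun X := WithLp.toLp 2 <|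
    Sum.elim (fun p => (X * Ad) p.1 p.2) (fun p => (Ad * X) p.1 p.2)
  map_add' X Y := by
    ext (p | p) <;> simp [Matrix.add_mul, Matrix.mul_add]
  map_smul' c X := by
    ext (p | p) <;> simp

theorem norm_mulPinvPair_sq (Ad : Matrix (Fin n) (Fin m) ℂ) (X : Matrix (Fin m) (Fin n) ℂ) :
    ‖mulPinvPair Ad X‖ ^ 2 = frobSq (X * Ad) + frobSq (Ad * X) := by
  rw [EuclideanSpace.norm_eq, Real.sq_sqrt (by positivity), Fintype.sum_sum_type]
  simp only [frobSq, ← Finset.sum_product', Fintype.sum_prod_type]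
  rfl

theorem Jmis_eq_half_norm_sq (X A : Matrix (Fin m) (Fin n) ℂ) (Ad : Matrix (Fin n) (Fin m) ℂ) :
    Jmis X A Ad = 1 / 2 * ‖mulPinvPair Ad A - mulPinvPair Ad X‖ ^ 2 := by
  rw [← norm_neg, neg_sub, ← map_sub, norm_mulPinvPair_sq, Jmis]
  ring

theorem Jmis_le_Jmis_iff {X Y A : Matrix (Fin m) (Fin n) ℂ} {Ad : Matrix (Fin n) (Fin m) ℂ} :
    Jmis X A Ad ≤ Jmis Y A Ad ↔
      ‖mulPinvPair Ad A - mulPinvPair Ad X‖ ≤ ‖mulPinvPair Ad A - mulPinvPair Ad Y‖ := by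
  rw [Jmis_eq_half_norm_sq, Jmis_eq_half_norm_sq, mul_le_mul_iff_right₀ (by norm_num),
    pow_le_pow_iff_left₀ (norm_nonneg _) (norm_nonneg _) two_ne_zero]

def feasibleSubmodule (A : Matrix (Fin m) (Fin n) ℂ) (S : Set (Fin m × Fin n)) :
    Submodule ℂ (Matrix (Fin m) (Fin n) ℂ) where
  carrier := {X | Feasible A X S}
  zero_mem' := ⟨fun _ _ => Matrix.zero_mulVec _, fun _ _ => by simp, fun _ _ => rfl⟩
  add_mem' := by
    rintro X Y ⟨hX₁, hX₂, hX₃⟩ ⟨hY₁, hY₂, hY₃⟩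
    refine ⟨fun v hv => ?_, fun v hv => ?_, fun ij hij => ?_⟩
    · rw [Matrix.add_mulVec, hX₁ v hv, hY₁ v hv, add_zero]
    · rw [Matrix.conjTranspose_add, Matrix.add_mulVec, hX₂ v hv, hY₂ v hv, add_zero]
    · simp [hX₃ ij hij, hY₃ ij hij]
  smul_mem' := by
    rintro c X ⟨hX₁, hX₂, hX₃⟩
    refine ⟨fun v hv => ?_, fun v hv => ?_, fun ij hij => ?_⟩
    · rw [Matrix.smul_mulVec, hX₁ v hv, smul_zero]
    · rw [Matrix.conjTranspose_smul, Matrix.smul_mulVec, hX₂ v hv, smul_zero]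
    · simp [hX₃ ij hij]

@[simp]
theorem mem_feasibleSubmodule {A X : Matrix (Fin m) (Fin n) ℂ} {S : Set (Fin m × Fin n)} :
    X ∈ feasibleSubmodule A S ↔ Feasible A X S :=
  Iff.rfl

theorem eq_zero_of_mul_pinv_eq_zero {A X : Matrix (Fin m) (Fin n) ℂ} {Ad : Matrix (Fin n) (Fin m) ℂ}
    (hA : A * Ad * A = A) (hX : ∀ v, A *ᵥ v = 0 → X *ᵥ v = 0) (hXAd : X * Ad = 0) : X = 0 := by
  refine Matrix.ext_iff_mulVec.2 fun v => ?_
  have hker : A *ᵥ (v - Ad *ᵥ A *ᵥ v) = 0 := by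
    rw [Matrix.mulVec_sub, Matrix.mulVec_mulVec, Matrix.mulVec_mulVec, hA, sub_self]
  have := hX _ hker
  rwa [Matrix.mulVec_sub, Matrix.mulVec_mulVec, hXAd, Matrix.zero_mulVec, sub_zero,
    ← Matrix.zero_mulVec v] at this

theorem injOn_mulPinvPair_feasibleSubmodule {A : Matrix (Fin m) (Fin n) ℂ}
    {Ad : Matrix (Fin n) (Fin m) ℂ} (hA : A * Ad * A = A) (S : Set (Fin m × Fin n)) :
    Set.InjOn (mulPinvPair Ad) (feasibleSubmodule A S) := by
  intro X hX Y hY hXY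
  have hsub : X - Y ∈ feasibleSubmodule A S := Submodule.sub_mem _ hX hY
  refine sub_eq_zero.1 (eq_zero_of_mul_pinv_eq_zero hA hsub.1 ?_)
  ext i j
  rw [Matrix.sub_mul, Matrix.sub_apply, Matrix.zero_apply, sub_eq_zero]
  exact congr($hXY (Sum.inl (i, j)))

end Misfit

/-- for an arbitrary matrix `A` and arbitrary sparsity pattern `S`, there is
exactly one minimizer of `J(·;A)` over the feasible set `F(A,S)`. -/
theorem stmt6 {m n : ℕ} (A : Matrix (Fin m) (Fin n) ℂ) (Ad : Matrix (Fin n) (Fin m) ℂ)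
    (hMP : IsMPInv A Ad) (S : Set (Fin m × Fin n)) :
    ∃! X, Feasible A X S ∧ ∀ Y, Feasible A Y S → Jmis X A Ad ≤ Jmis Y A Ad := by
  simpa only [mem_feasibleSubmodule, Jmis_le_Jmis_iff] using
    (mulPinvPair Ad).existsUnique_forall_norm_sub_le_of_injOn
      (injOn_mulPinvPair_feasibleSubmodule hMP.1 S) (mulPinvPair Ad A)
end

section
/- Let A ∈ ℂ^{m×n}, let p ∈ [1,∞] and let p' be its Hölder dual, 1/p + 1/p' = 1. Let ‖A‖_p denote the operator norm of A as a linear map from (ℂ^n, ℓ_p) to (ℂ^m, ℓ_p), and similarly for ‖A‖_{p'}. Then ‖A‖_p ‖A‖_{p'} ≤ (mn)^{|1/2 − 1/p|} ‖A‖₂², where ‖A‖₂ is the spectral norm. -/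
/-
On `ℂ^k`, the `ℓ_p` norms satisfy `‖x‖_q ≤ ‖x‖_p ≤ k^(1/p - 1/q) ‖x‖_q` for `p ≤ q`
(the second inequality is Hölder's). For `p ≤ 2`, routing `x ↦ A x` through `ℓ₂` on both
sides gives `‖A‖_p ≤ m^(1/p - 1/2) ‖A‖₂`, and for `p ≥ 2` likewise
`‖A‖_p ≤ n^(1/2 - 1/p) ‖A‖₂`.
Exactly one of `p, p'` lies below `2`, and `1/p - 1/2 = 1/2 - 1/p'`, so multiplying the two
bounds gives the claim.
-/

open scoped Matrix ENNReal

/-- The spectral norm (largest singular value): the operator norm of the matrix as a map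
between Euclidean spaces. -/
noncomputable def specNorm {m n : ℕ} (M : Matrix (Fin m) (Fin n) ℂ) : ℝ :=
  ‖LinearMap.toContinuousLinearMap (Matrix.toEuclideanLin M)‖

/-- The induced matrix p-norm: the operator norm of `A` as a linear map
from `(ℂ^n, ℓ_p)` to `(ℂ^m, ℓ_p)`. -/
noncomputable def opNormLp (p : ℝ≥0∞) [Fact (1 ≤ p)] {m n : ℕ}
    (A : Matrix (Fin m) (Fin n) ℂ) : ℝ :=
  ‖LinearMap.toContinuousLinearMap
      ((WithLp.linearEquiv p ℂ (Fin m → ℂ)).symm.toLinearMap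
        ∘ₗ A.mulVecLin
        ∘ₗ (WithLp.linearEquiv p ℂ (Fin n → ℂ)).toLinearMap)‖

namespace PiLp

variable {ι : Type*} [Fintype ι] {β : ι → Type*} [∀ i, SeminormedAddCommGroup (β i)]
  {p q : ℝ≥0∞}

lemma norm_toLp_rpow_eq_sum (hp : 0 < p.toReal) (x : ∀ i, β i) :
    ‖WithLp.toLp p x‖ ^ p.toReal = ∑ i, ‖x i‖ ^ p.toReal := by
  rw [norm_eq_sum hp, one_div, Real.rpow_inv_rpow (by positivity) hp.ne']

variable [Fact (1 ≤ p)] [Fact (1 ≤ q)]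

lemma norm_toLp_le_of_le (hpq : p ≤ q) (x : ∀ i, β i) :
    ‖WithLp.toLp q x‖ ≤ ‖WithLp.toLp p x‖ := by
  have hx_le (i : ι) : ‖x i‖ ≤ ‖WithLp.toLp p x‖ := norm_apply_le (WithLp.toLp p x) i
  rcases eq_or_ne q ∞ with rfl | hq
  · rw [norm_toLp]
    exact pi_norm_le_iff_of_nonneg (norm_nonneg _) |>.mpr hx_le
  have hp0 : 0 < p.toReal := ENNReal.toReal_pos (zero_lt_one.trans_le Fact.out).ne'
    (ne_top_of_le_ne_top hq hpq)
  have hpq' : p.toReal ≤ q.toReal := ENNReal.toReal_mono hq hpq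
  have hq0 : 0 < q.toReal := hp0.trans_le hpq'
  set N := ‖WithLp.toLp p x‖
  refine (Real.rpow_le_rpow_iff (norm_nonneg _) (norm_nonneg _) hq0).mp ?_
  calc ‖WithLp.toLp q x‖ ^ q.toReal
        = ∑ i, ‖x i‖ ^ p.toReal * ‖x i‖ ^ (q.toReal - p.toReal) := by
        rw [norm_toLp_rpow_eq_sum hq0]
        refine Finset.sum_congr rfl fun i _ => ?_
        rw [← Real.rpow_add' (norm_nonneg _) (by linarith), add_sub_cancel]
    _ ≤ ∑ i, ‖x i‖ ^ p.toReal * N ^ (q.toReal - p.toReal) := by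
        gcongr with i
        exact hx_le i
    _ = N ^ q.toReal := by
        rw [← Finset.sum_mul, ← norm_toLp_rpow_eq_sum hp0, ← Real.rpow_add' (norm_nonneg _)
          (by linarith), add_sub_cancel]

lemma norm_toLp_le_card_rpow_mul (hpq : p ≤ q) (x : ∀ i, β i) :
    ‖WithLp.toLp p x‖ ≤
      (Fintype.card ι : ℝ) ^ ((1 / p).toReal - (1 / q).toReal) * ‖WithLp.toLp q x‖ := by
  rcases eq_or_ne p q with rfl | hne
  · simp
  have hp : p ≠ ∞ := ne_top_of_lt ((lt_of_le_of_ne hpq hne).trans_le le_top)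
  have hp0 : 0 < p.toReal := ENNReal.toReal_pos (zero_lt_one.trans_le Fact.out).ne' hp
  refine (Real.rpow_le_rpow_iff (norm_nonneg _) (by positivity) hp0).mp ?_
  rw [norm_toLp_rpow_eq_sum hp0, Real.mul_rpow (by positivity) (norm_nonneg _),
    ← Real.rpow_mul (by positivity)]
  rcases eq_or_ne q ∞ with rfl | hq
  · calc ∑ i, ‖x i‖ ^ p.toReal ≤ ∑ _i : ι, ‖x‖ ^ p.toReal := by
          gcongr with i
          exact norm_le_pi_norm x i
      _ = _ := by
          simp [ENNReal.toReal_inv, hp0.ne']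
  · have hpq' : p.toReal < q.toReal := ENNReal.toReal_strict_mono hq (lt_of_le_of_ne hpq hne)
    have hq0 : 0 < q.toReal := hp0.trans hpq'
    set r := (p.toReal⁻¹ - q.toReal⁻¹)⁻¹
    have hr0 : 0 < r := inv_pos.mpr (sub_pos.mpr (inv_strictAnti₀ hp0 hpq'))
    have hHolder : q.toReal.HolderTriple r p.toReal :=
      ⟨by simp only [r, inv_inv]; ring, hq0, hr0⟩
    have := Real.Lr_rpow_le_Lp_mul_Lq_of_nonneg Finset.univ hHolder
      (f := fun i => ‖x i‖) (g := 1) (fun i _ => norm_nonneg _) (fun i _ => zero_le_one)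
    simp only [Pi.one_apply, mul_one, Real.one_rpow, Finset.sum_const, Finset.card_univ,
      nsmul_eq_mul] at this
    rw [← norm_toLp_rpow_eq_sum hq0, ← Real.rpow_mul (norm_nonneg _),
      mul_div_cancel₀ _ hq0.ne'] at this
    convert this using 1
    rw [mul_comm]
    congr 2
    simp only [r, one_div, ENNReal.toReal_inv]
    field_simp

end PiLp

section
variable {m n : ℕ} (A : Matrix (Fin m) (Fin n) ℂ)

lemma specNorm_nonneg : 0 ≤ specNorm A := norm_nonneg _

lemma norm_toLp_mulVec_le_specNorm (x : Fin n → ℂ) :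
    ‖WithLp.toLp 2 (A *ᵥ x)‖ ≤ specNorm A * ‖WithLp.toLp 2 x‖ :=
  (LinearMap.toContinuousLinearMap (Matrix.toEuclideanLin A)).le_opNorm (WithLp.toLp 2 x)

variable {p : ℝ≥0∞} [Fact (1 ≤ p)]

lemma opNormLp_nonneg : 0 ≤ opNormLp p A := norm_nonneg _

lemma opNormLp_le_bound {C : ℝ} (hC : 0 ≤ C)
    (h : ∀ x, ‖WithLp.toLp p (A *ᵥ x)‖ ≤ C * ‖WithLp.toLp p x‖) : opNormLp p A ≤ C :=
  ContinuousLinearMap.opNorm_le_bound _ hC fun v => h v.ofLp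

lemma opNormLp_le_mul_specNorm {a b : ℝ} (ha : 0 ≤ a) (hb : 0 ≤ b)
    (hm : ∀ y : Fin m → ℂ, ‖WithLp.toLp p y‖ ≤ a * ‖WithLp.toLp 2 y‖)
    (hn : ∀ x : Fin n → ℂ, ‖WithLp.toLp 2 x‖ ≤ b * ‖WithLp.toLp p x‖) :
    opNormLp p A ≤ a * specNorm A * b := by
  refine opNormLp_le_bound A (mul_nonneg (mul_nonneg ha (specNorm_nonneg A)) hb) fun x => ?_
  calc ‖WithLp.toLp p (A *ᵥ x)‖ ≤ a * ‖WithLp.toLp 2 (A *ᵥ x)‖ := hm _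
    _ ≤ a * (specNorm A * (b * ‖WithLp.toLp p x‖)) := by
        gcongr
        exact (norm_toLp_mulVec_le_specNorm A x).trans
          (mul_le_mul_of_nonneg_left (hn x) (specNorm_nonneg A))
    _ = a * specNorm A * b * ‖WithLp.toLp p x‖ := by ring

lemma opNormLp_le_of_le_two (hp : p ≤ 2) :
    opNormLp p A ≤ (m : ℝ) ^ ((1 / p).toReal - 1 / 2) * specNorm A := by
  have := opNormLp_le_mul_specNorm A (by positivity) zero_le_one
    (fun y => PiLp.norm_toLp_le_card_rpow_mul hp y)
    (fun x => by simpa using PiLp.norm_toLp_le_of_le hp x)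
  simpa using this

lemma opNormLp_le_of_two_le (hp : 2 ≤ p) :
    opNormLp p A ≤ (n : ℝ) ^ (1 / 2 - (1 / p).toReal) * specNorm A := by
  have := opNormLp_le_mul_specNorm A zero_le_one (by positivity)
    (fun y => by simpa using PiLp.norm_toLp_le_of_le hp y)
    (fun x => PiLp.norm_toLp_le_card_rpow_mul hp x)
  simpa [mul_comm] using this

end

namespace ENNReal

variable {p q : ℝ≥0∞}

lemma le_two_iff_two_le (hpq : 1 / p + 1 / q = 1) : p ≤ 2 ↔ 2 ≤ q := by
  simp only [one_div] at hpq
  have hq : q⁻¹ ≠ ∞ := ne_top_of_le_ne_top one_ne_top (le_add_self.trans_eq hpq)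
  calc p ≤ 2 ↔ 2⁻¹ + q⁻¹ ≤ p⁻¹ + q⁻¹ := by
        rw [ENNReal.add_le_add_iff_right hq, ENNReal.inv_le_inv]
    _ ↔ 2⁻¹ + q⁻¹ ≤ 2⁻¹ + 2⁻¹ := by rw [hpq, ENNReal.inv_two_add_inv_two]
    _ ↔ 2 ≤ q := by rw [ENNReal.add_le_add_iff_left (by simp), ENNReal.inv_le_inv]

lemma toReal_one_div_add_toReal_one_div (hpq : 1 / p + 1 / q = 1) :
    (1 / p).toReal + (1 / q).toReal = 1 := by
  rw [← ENNReal.toReal_add (ne_top_of_le_ne_top one_ne_top (le_self_add.trans_eq hpq))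
    (ne_top_of_le_ne_top one_ne_top (le_add_self.trans_eq hpq)), hpq, toReal_one]

end ENNReal

lemma opNormLp_mul_opNormLp_le_of_le_two {m n : ℕ} (A : Matrix (Fin m) (Fin n) ℂ)
    {p p' : ℝ≥0∞} [Fact (1 ≤ p)] [Fact (1 ≤ p')] (hconj : 1 / p + 1 / p' = 1) (hp : p ≤ 2) :
    opNormLp p A * opNormLp p' A ≤
      ((m : ℝ) * n) ^ |1 / 2 - (1 / p).toReal| * specNorm A ^ 2 := by
  have hsum := ENNReal.toReal_one_div_add_toReal_one_div hconj
  have hp0 : p ≠ 0 := (zero_lt_one.trans_le Fact.out).ne'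
  have hhalf : 1 / 2 ≤ (1 / p).toReal := by
    simpa [hp0] using ENNReal.toReal_mono (by simp [hp0]) (ENNReal.div_le_div_left hp 1)
  have hm : opNormLp p A ≤ (m : ℝ) ^ |1 / 2 - (1 / p).toReal| * specNorm A := by
    rw [abs_sub_comm, abs_of_nonneg (by linarith)]
    exact opNormLp_le_of_le_two A hp
  have hn : opNormLp p' A ≤ (n : ℝ) ^ |1 / 2 - (1 / p).toReal| * specNorm A := by
    rw [abs_of_nonpos (by linarith), show -(1 / 2 - (1 / p).toReal) = 1 / 2 - (1 / p').toReal by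
      linarith]
    exact opNormLp_le_of_two_le A ((ENNReal.le_two_iff_two_le hconj).mp hp)
  calc opNormLp p A * opNormLp p' A
      ≤ ((m : ℝ) ^ |1 / 2 - (1 / p).toReal| * specNorm A) *
          ((n : ℝ) ^ |1 / 2 - (1 / p).toReal| * specNorm A) :=
            mul_le_mul hm hn (opNormLp_nonneg A) (mul_nonneg (by positivity) (specNorm_nonneg A))
    _ = ((m : ℝ) * n) ^ |1 / 2 - (1 / p).toReal| * specNorm A ^ 2 := by
        rw [Real.mul_rpow (by positivity) (by positivity)]; ring

/-- for Hölder conjugate exponents `p, p'`,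
`‖A‖_p ‖A‖_{p'} ≤ (mn)^{|1/2 - 1/p|} ‖A‖₂²`. -/
theorem stmt8 {m n : ℕ} (A : Matrix (Fin m) (Fin n) ℂ)
    (p p' : ℝ≥0∞) [Fact (1 ≤ p)] [Fact (1 ≤ p')]
    (hconj : 1 / p + 1 / p' = 1) :
    opNormLp p A * opNormLp p' A ≤
      ((m : ℝ) * n) ^ |1 / 2 - (1 / p).toReal| * specNorm A ^ 2 := by
  rcases le_total p 2 with hp | hp
  · exact opNormLp_mul_opNormLp_le_of_le_two A hconj hp
  · have hconj' : 1 / p' + 1 / p = 1 := by rwa [add_comm]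
    have hsum := ENNReal.toReal_one_div_add_toReal_one_div hconj
    have hexp : |1 / 2 - (1 / p).toReal| = |1 / 2 - (1 / p').toReal| := by
      rw [← abs_neg]; congr 1; linarith
    rw [mul_comm, hexp]
    exact opNormLp_mul_opNormLp_le_of_le_two A hconj'
      ((ENNReal.le_two_iff_two_le hconj').mpr hp)
end
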